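/- arXiv:2503.15735 — 2 statements merged into one kernel-verified Lean document; each statement's English description precedes it below -/
import Mathlib

section
/- For every real number a > -1 and nonnegative integer m, the integral ∫_0^∞ dx/(x^4 + 2a x^2 + 1)^{m+1} equals π / (2^{m+3/2} (a+1)^{m+1/2}) · P_m(a), where P_m(a) = P_m^{(m+1/2, -m-1/2)}(a) is the Jacobi polynomial with parameters α = m+1/2, β = -m-1/2 evaluated at a. -/
/-!
Write `f(x) = (x⁴ + 2ax² + 1)^{-(m+1)}` and `c = 2(a + 1) > 0`. The substitution `x ↦ 1/x`
shows that `f` and `x⁻² f(1/x)` have the same integral over `(0, ∞)`. Since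
`x⁴ + 2ax² + 1 = x² ((x - 1/x)² + c)` and `x^{2m+1} + x^{-(2m+1)} = (x + 1/x) F((x - 1/x)²)`
with `F(s) = ∑ₖ C(m+k, 2k) sᵏ`, their sum is `(1 + x⁻²) g(x - 1/x)` for the even function
`g(w) = F(w²) / (w² + c)^{m+1}`. As `x ↦ x - 1/x` maps `(0, ∞)` onto `ℝ`, the integral is
`∫₀^∞ g`, a combination of the Beta integrals `∫₀^∞ w^{2k} / (w² + c)^{m+1}`, which
integration by parts evaluates. On the other side, the Chu–Vandermonde identity turns
`P_m^{(m+1/2, -m-1/2)}(a)` into `4^{-m} ∑ₖ C(m+k, k) C(2(m-k), m-k) (2(a+1))ᵏ`, and the two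
sums agree term by term.
-/

open Finset Real MeasureTheory

/-- Generalized binomial coefficient `binom(u, j) = u(u-1)⋯(u-j+1)/j!`. -/
noncomputable def gbinom (u : ℝ) (j : ℕ) : ℝ :=
  (∏ i ∈ Finset.range j, (u - i)) / (Nat.factorial j)

/-- Jacobi polynomial via the explicit sum formula. -/
noncomputable def jacobiP (n : ℕ) (α β : ℝ) (x : ℝ) : ℝ :=
  ((2:ℝ)^n)⁻¹ * ∑ k ∈ Finset.range (n+1),
    gbinom ((n:ℝ) + α) (n - k) * gbinom ((n:ℝ) + β) k * (x - 1)^k * (x + 1)^(n - k)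

open Filter Topology

lemma gbinom_eq_choose (u : ℝ) (j : ℕ) : gbinom u j = Ring.choose u j := by
  rw [Ring.choose_eq_smul, ← Polynomial.aeval_eq_smeval, ← Polynomial.eval_map_algebraMap,
    descPochhammer_map, descPochhammer_eval_eq_prod_range, gbinom, smul_eq_mul, inv_mul_eq_div]

lemma gbinom_succ (u : ℝ) (j : ℕ) : gbinom u (j + 1) = gbinom u j * (u - j) / (j + 1) := by
  rw [gbinom, gbinom, prod_range_succ, Nat.factorial_succ, Nat.cast_mul, Nat.cast_succ]
  field_simp

lemma ringChoose_neg_half (i : ℕ) :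
    Ring.choose (-1 / 2 : ℝ) i = (-1 / 4) ^ i * i.centralBinom := by
  rw [← gbinom_eq_choose]
  induction i with
  | zero => simp [gbinom]
  | succ i ih =>
    have h := Nat.succ_mul_centralBinom_succ i
    rw [gbinom_succ, ih, div_eq_iff (by positivity)]
    rify at h
    linear_combination (-1 / 4) ^ i / 4 * h

section BinomialRing

variable {R : Type*} [CommRing R] [BinomialRing R]

lemma ringChoose_add_eq_sum_range (u v : R) (n : ℕ) :
    ∑ l ∈ range (n + 1), Ring.choose u l * Ring.choose v (n - l) = Ring.choose (u + v) n := by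
  rw [Ring.add_choose_eq n (Commute.all u v), Nat.sum_antidiagonal_eq_sum_range_succ_mk]

lemma sum_ringChoose_mul_choose (u v : R) {i n : ℕ} (hin : i ≤ n) :
    ∑ k ∈ range (n + 1), Ring.choose v (n - k) * Ring.choose u k * k.choose i =
      Ring.choose u i * Ring.choose (u - i + v) (n - i) := by
  have hlow : ∑ k ∈ range i, Ring.choose v (n - k) * Ring.choose u k * k.choose i = 0 :=
    sum_eq_zero fun k hk => by simp [Nat.choose_eq_zero_of_lt (mem_range.1 hk)]
  rw [range_eq_Ico, ← sum_Ico_consecutive _ (Nat.zero_le i) (by omega : i ≤ n + 1),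
    ← range_eq_Ico, hlow, zero_add, sum_Ico_eq_sum_range, ← ringChoose_add_eq_sum_range,
    mul_sum, show n + 1 - i = n - i + 1 by omega]
  refine sum_congr rfl fun l _ => ?_
  have h := Ring.choose_smul_choose u (Nat.le_add_right i l)
  rw [Nat.add_sub_cancel_left, nsmul_eq_mul] at h
  rw [show n - (i + l) = n - i - l by omega, ← mul_assoc, ← h]
  ring

end BinomialRing

section SubOnePow

variable {R : Type*} [CommRing R]

lemma sub_one_pow_mul_add_one_pow (x : R) {k m : ℕ} (hkm : k ≤ m) :
    (x - 1) ^ k * (x + 1) ^ (m - k) =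
      ∑ i ∈ range (m + 1), (k.choose i : R) * (-2) ^ i * (x + 1) ^ (m - i) := by
  rw [show x - 1 = -2 + (x + 1) by ring, add_pow, sum_mul]
  calc ∑ i ∈ range (k + 1), (-2) ^ i * (x + 1) ^ (k - i) * (k.choose i : R) * (x + 1) ^ (m - k)
      = ∑ i ∈ range (k + 1), (k.choose i : R) * (-2) ^ i * (x + 1) ^ (m - i) :=
        sum_congr rfl fun i hi => by
          rw [show m - i = k - i + (m - k) by have := mem_range_succ_iff.1 hi; omega, pow_add]
          ring
    _ = _ := sum_subset (range_subset_range.2 (by omega)) fun i _ hi => by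
          simp [Nat.choose_eq_zero_of_lt (by simpa using hi : k < i)]

lemma sum_mul_sub_one_pow_mul_add_one_pow (A : ℕ → R) (x : R) (m : ℕ) :
    ∑ k ∈ range (m + 1), A k * (x - 1) ^ k * (x + 1) ^ (m - k) =
      ∑ i ∈ range (m + 1),
        (-2) ^ i * (x + 1) ^ (m - i) * ∑ k ∈ range (m + 1), A k * k.choose i :=
  calc _ = ∑ k ∈ range (m + 1), ∑ i ∈ range (m + 1),
        A k * ((k.choose i : R) * (-2) ^ i * (x + 1) ^ (m - i)) :=
        sum_congr rfl fun k hk => by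
          rw [mul_assoc, sub_one_pow_mul_add_one_pow x (mem_range_succ_iff.1 hk), mul_sum]
    _ = _ := by
        rw [sum_comm]
        exact sum_congr rfl fun i _ => by rw [mul_sum]; exact sum_congr rfl fun k _ => by ring

end SubOnePow

theorem jacobiP_half_eq_sum (m : ℕ) (x : ℝ) :
    jacobiP m ((m:ℝ) + 1/2) (-(m:ℝ) - 1/2) x =
      ∑ k ∈ range (m + 1), ((m + k).choose k * (m - k).centralBinom : ℝ) / 4 ^ m *
        (2 * (x + 1)) ^ k := by
  have hcoeff : ∀ i ∈ range (m + 1), ∑ k ∈ range (m + 1),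
      Ring.choose (2 * m + 1 / 2 : ℝ) (m - k) * Ring.choose (-1 / 2 : ℝ) k * k.choose i =
        (-1 / 4) ^ i * i.centralBinom * (2 * m - i).choose (m - i) := fun i hi => by
    have him := mem_range_succ_iff.1 hi
    rw [sum_ringChoose_mul_choose _ _ him, ringChoose_neg_half,
      show (-1 / 2 - i + (2 * m + 1 / 2) : ℝ) = (2 * m - i : ℕ) by
        push_cast [Nat.cast_sub (show i ≤ 2 * m by omega)]; ring,
      Ring.choose_natCast]
  rw [jacobiP, show (m:ℝ) + (m + 1/2) = 2 * m + 1 / 2 by ring,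
    show (m:ℝ) + (-m - 1/2) = -1 / 2 by ring]
  simp only [gbinom_eq_choose]
  rw [sum_mul_sub_one_pow_mul_add_one_pow, sum_congr rfl fun i hi => by rw [hcoeff i hi],
    ← sum_range_reflect, mul_sum]
  refine sum_congr rfl fun k hk => ?_
  have hkm := mem_range_succ_iff.1 hk
  rw [show m + 1 - 1 - k = m - k by omega, show 2 * m - (m - k) = m + k by omega,
    show m - (m - k) = k by omega]
  have h4 : (4 : ℝ) ^ m = 2 ^ (m - k) * 2 ^ k * 2 ^ m := by
    rw [← pow_add, Nat.sub_add_cancel hkm, ← mul_pow]; norm_num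
  have hquarter : (-1 / 4 : ℝ) ^ (m - k) = ((-2) ^ (m - k) * 2 ^ (m - k))⁻¹ := by
    rw [← mul_pow, ← inv_pow]; norm_num
  rw [h4, hquarter, mul_pow]
  field_simp

section FibPoly

variable {R : Type*} [CommRing R]

-- `F_{2m+1}(v) = fibPolyOdd m (v²)` and `F_{2m+2}(v) = v * fibPolyEven m (v²)` for the
-- Fibonacci polynomials `F_{n+2}(v) = v F_{n+1}(v) + F_n(v)`, `F_0 = 0`, `F_1 = 1`.
def fibPolyOdd (m : ℕ) (s : R) : R :=
  ∑ k ∈ range (m + 1), ((m + k).choose (2 * k) : R) * s ^ k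

def fibPolyEven (m : ℕ) (s : R) : R :=
  ∑ k ∈ range (m + 1), ((m + 1 + k).choose (2 * k + 1) : R) * s ^ k

lemma fibPolyOdd_succ (m : ℕ) (s : R) :
    fibPolyOdd (m + 1) s = fibPolyOdd m s + s * fibPolyEven m s := by
  have hodd : fibPolyOdd m s = ∑ k ∈ range (m + 2), ((m + k).choose (2 * k) : R) * s ^ k := by
    rw [fibPolyOdd, sum_range_succ _ (m + 1), Nat.choose_eq_zero_of_lt (by omega)]; simp
  have hpascal : ∀ k, ((m + 1 + (k + 1)).choose (2 * (k + 1)) : R) * s ^ (k + 1) =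
      ((m + (k + 1)).choose (2 * (k + 1)) : R) * s ^ (k + 1) +
        s * (((m + 1 + k).choose (2 * k + 1) : R) * s ^ k) := fun k => by
    rw [show m + 1 + (k + 1) = (m + 1 + k) + 1 by ring, show 2 * (k + 1) = (2 * k + 1) + 1 by ring,
      Nat.choose_succ_succ', show m + 1 + k = m + (k + 1) by ring]
    push_cast
    ring
  rw [fibPolyOdd, hodd, fibPolyEven, sum_range_succ', sum_range_succ' _ (m + 1), mul_sum,
    sum_congr rfl fun k _ => hpascal k, sum_add_distrib]
  simp only [mul_zero, Nat.choose_zero_right]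
  ring

lemma fibPolyEven_succ (m : ℕ) (s : R) :
    fibPolyEven (m + 1) s = fibPolyOdd (m + 1) s + fibPolyEven m s := by
  have heven : fibPolyEven m s =
      ∑ k ∈ range (m + 2), ((m + 1 + k).choose (2 * k + 1) : R) * s ^ k := by
    rw [fibPolyEven, sum_range_succ _ (m + 1), Nat.choose_eq_zero_of_lt (by omega)]; simp
  rw [fibPolyEven, fibPolyOdd, heven, ← sum_add_distrib]
  refine sum_congr rfl fun k _ => ?_
  rw [show m + 1 + 1 + k = (m + 1 + k) + 1 by ring, Nat.choose_succ_succ']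
  push_cast
  ring

theorem pow_add_pow_and_pow_sub_pow_eq_fibPoly {x y : R} (hxy : x * y = 1) (m : ℕ) :
    x ^ (2 * m + 1) + y ^ (2 * m + 1) = (x + y) * fibPolyOdd m ((x - y) ^ 2) ∧
      x ^ (2 * m + 2) - y ^ (2 * m + 2) = (x - y) * (x + y) * fibPolyEven m ((x - y) ^ 2) := by
  induction m with
  | zero => simp [fibPolyOdd, fibPolyEven, sq_sub_sq, mul_comm (x - y)]
  | succ m ih =>
    obtain ⟨hodd, heven⟩ := ih
    have hodd' : x ^ (2 * (m + 1) + 1) + y ^ (2 * (m + 1) + 1) =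
        (x + y) * fibPolyOdd (m + 1) ((x - y) ^ 2) := by
      rw [fibPolyOdd_succ]
      linear_combination (x ^ (2 * m + 1) + y ^ (2 * m + 1)) * hxy + hodd + (x - y) * heven
    refine ⟨hodd', ?_⟩
    rw [fibPolyEven_succ]
    linear_combination (x ^ (2 * m + 2) - y ^ (2 * m + 2)) * hxy + heven + (x - y) * hodd'

theorem pow_add_pow_eq_mul_fibPolyOdd {x y : R} (hxy : x * y = 1) (m : ℕ) :
    x ^ (2 * m + 1) + y ^ (2 * m + 1) = (x + y) * fibPolyOdd m ((x - y) ^ 2) :=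
  (pow_add_pow_and_pow_sub_pow_eq_fibPoly hxy m).1

end FibPoly

theorem integrable_pow_div_pow_of_le {P : ℝ → ℝ} (hP : Continuous P) {δ : ℝ} (hδ : 0 < δ)
    {d : ℕ} (hPδ : ∀ x, δ * (1 + x ^ 2) ^ d ≤ P x) {j N : ℕ} (hj : j < d * N) :
    Integrable fun x => (x ^ 2) ^ j / P x ^ N := by
  obtain ⟨n, hn⟩ : ∃ n, d * N = n + 1 := ⟨d * N - 1, by omega⟩
  have hPpos : ∀ x, 0 < P x := fun x => lt_of_lt_of_le (by positivity) (hPδ x)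
  refine (integrable_inv_one_add_sq.const_mul (δ ^ N)⁻¹).mono'
    (Continuous.div (by fun_prop) (by fun_prop) fun x =>
      (pow_pos (hPpos x) N).ne').aestronglyMeasurable
    (Eventually.of_forall fun x => ?_)
  have h1 : 1 ≤ 1 + x ^ 2 := le_add_of_nonneg_right (sq_nonneg x)
  have hnum : (x ^ 2) ^ j ≤ (1 + x ^ 2) ^ n :=
    (pow_le_pow_left₀ (sq_nonneg x) (by linarith) j).trans (pow_le_pow_right₀ h1 (by omega))
  have hden : δ ^ N * (1 + x ^ 2) ^ (n + 1) ≤ P x ^ N := by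
    rw [← hn, pow_mul, ← mul_pow]; exact pow_le_pow_left₀ (by positivity) (hPδ x) N
  rw [Real.norm_eq_abs, abs_of_nonneg (div_nonneg (by positivity) (pow_pos (hPpos x) N).le)]
  calc (x ^ 2) ^ j / P x ^ N ≤ (1 + x ^ 2) ^ n / (δ ^ N * (1 + x ^ 2) ^ (n + 1)) :=
        div_le_div₀ (by positivity) hnum (by positivity) hden
    _ = (δ ^ N)⁻¹ * (1 + x ^ 2)⁻¹ := by
        field_simp
        ring

lemma integrable_pow_div_sq_add_pow {c : ℝ} (hc : 0 < c) {j N : ℕ} (hj : j < N) :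
    Integrable fun w => (w ^ 2) ^ j / (w ^ 2 + c) ^ N :=
  integrable_pow_div_pow_of_le (d := 1) (by fun_prop) (lt_min one_pos hc)
    (fun w => by nlinarith [min_le_left 1 c, min_le_right 1 c, sq_nonneg w]) (by omega)

theorem integral_Ioi_inv_sq_add {c : ℝ} (hc : 0 < c) :
    ∫ w in Set.Ioi (0 : ℝ), (w ^ 2 + c)⁻¹ = π / (2 * √c) := by
  have hs : 0 < √c := sqrt_pos.2 hc
  have hscale := integral_comp_mul_left_Ioi (fun u => (1 + u ^ 2)⁻¹) 0 (inv_pos.2 hs)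
  rw [mul_zero, integral_Ioi_inv_one_add_sq, arctan_zero, sub_zero, smul_eq_mul, inv_inv] at hscale
  have hpt : ∀ w : ℝ, (1 + ((√c)⁻¹ * w) ^ 2)⁻¹ = c * (w ^ 2 + c)⁻¹ := fun w => by
    rw [mul_pow, inv_pow, sq_sqrt hc.le]; field_simp; ring
  simp_rw [hpt, integral_const_mul] at hscale
  rw [eq_div_iff (by positivity)]
  refine mul_left_cancel₀ hc.ne' ?_
  linear_combination (2 * √c) * hscale + π * mul_self_sqrt hc.le

-- `B(k + 1/2, m - k + 1/2) / π`
noncomputable def betaHalf (k m : ℕ) : ℝ :=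
  (k.centralBinom * (m - k).centralBinom : ℝ) / (4 ^ m * m.choose k)

lemma betaHalf_zero_zero : betaHalf 0 0 = 1 := by simp [betaHalf]

lemma betaHalf_zero_succ (m : ℕ) :
    betaHalf 0 (m + 1) = (2 * m + 1) / (2 * m + 2) * betaHalf 0 m := by
  have h := Nat.succ_mul_centralBinom_succ m
  rify at h
  simp only [betaHalf, Nat.centralBinom_zero, Nat.choose_zero_right, Nat.sub_zero, pow_succ]
  field_simp
  linear_combination 2 * h

lemma betaHalf_succ_succ {k m : ℕ} (hkm : k ≤ m) :
    betaHalf (k + 1) (m + 1) = (2 * k + 1) / (2 * m + 2) * betaHalf k m := by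
  have hcb := Nat.succ_mul_centralBinom_succ k
  have hch := Nat.add_one_mul_choose_eq m k
  have hpos : (0 : ℝ) < m.choose k := by exact_mod_cast Nat.choose_pos hkm
  have hpos' : (0 : ℝ) < (m + 1).choose (k + 1) := by exact_mod_cast Nat.choose_pos (by omega)
  rify at hcb hch
  simp only [betaHalf, Nat.add_sub_add_right, pow_succ]
  field_simp
  linear_combination (2 * (k + 1).centralBinom * (m - k).centralBinom : ℝ) * hch +
    (2 * (m - k).centralBinom * (m + 1).choose (k + 1) : ℝ) * hcb

section PowDivSqAddPow

variable {c : ℝ} (hc : 0 < c)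
include hc

lemma tendsto_pow_div_sq_add_pow_atTop {k m : ℕ} (hkm : k ≤ m) :
    Tendsto (fun w : ℝ => w ^ (2 * k + 1) / (w ^ 2 + c) ^ (m + 1)) atTop (𝓝 0) := by
  refine tendsto_of_tendsto_of_tendsto_of_le_of_le' tendsto_const_nhds tendsto_inv_atTop_zero
    (eventually_ge_atTop 0 |>.mono fun w hw => by positivity)
    (eventually_ge_atTop 1 |>.mono fun w hw => ?_)
  rw [inv_eq_one_div, div_le_div_iff₀ (by positivity) (by positivity), one_mul, ← pow_succ]
  calc w ^ (2 * k + 1 + 1) ≤ w ^ (2 * (m + 1)) := pow_le_pow_right₀ hw (by omega)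
    _ = (w ^ 2) ^ (m + 1) := pow_mul w 2 (m + 1)
    _ ≤ (w ^ 2 + c) ^ (m + 1) := pow_le_pow_left₀ (sq_nonneg w) (by linarith) _

lemma hasDerivAt_pow_div_sq_add_pow (k m : ℕ) (w : ℝ) :
    HasDerivAt (fun w : ℝ => w ^ (2 * k + 1) / (w ^ 2 + c) ^ (m + 1))
      ((2 * k + 1) * ((w ^ 2) ^ k / (w ^ 2 + c) ^ (m + 1)) -
        (2 * m + 2) * ((w ^ 2) ^ (k + 1) / (w ^ 2 + c) ^ (m + 2))) w := by
  have hpos : 0 < w ^ 2 + c := by positivity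
  refine ((hasDerivAt_pow _ w).div (((hasDerivAt_pow 2 w).add_const c).fun_pow (m + 1))
    (pow_pos hpos _).ne').congr_deriv ?_
  field_simp
  push_cast
  ring

theorem integral_Ioi_pow_div_sq_add_pow_succ_succ {k m : ℕ} (hkm : k ≤ m) :
    (2 * m + 2) * ∫ w in Set.Ioi (0 : ℝ), (w ^ 2) ^ (k + 1) / (w ^ 2 + c) ^ (m + 2) =
      (2 * k + 1) * ∫ w in Set.Ioi (0 : ℝ), (w ^ 2) ^ k / (w ^ 2 + c) ^ (m + 1) := by
  have hint₁ := (integrable_pow_div_sq_add_pow hc (show k < m + 1 by omega)).const_mul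
    (2 * k + 1 : ℝ)
  have hint₂ := (integrable_pow_div_sq_add_pow hc (show k + 1 < m + 2 by omega)).const_mul
    (2 * m + 2 : ℝ)
  have hftc := integral_Ioi_of_hasDerivAt_of_tendsto' (a := 0)
    (fun w _ => hasDerivAt_pow_div_sq_add_pow hc k m w) (hint₁.sub hint₂).integrableOn
    (tendsto_pow_div_sq_add_pow_atTop hc hkm)
  rw [integral_sub hint₁.integrableOn hint₂.integrableOn, integral_const_mul,
    integral_const_mul, zero_pow (by omega), zero_div, sub_self] at hftc
  linarith

theorem integral_Ioi_pow_div_sq_add_pow_eq_add {k m : ℕ} (hkm : k ≤ m) :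
    ∫ w in Set.Ioi (0 : ℝ), (w ^ 2) ^ k / (w ^ 2 + c) ^ (m + 1) =
      (∫ w in Set.Ioi (0 : ℝ), (w ^ 2) ^ (k + 1) / (w ^ 2 + c) ^ (m + 2)) +
        c * ∫ w in Set.Ioi (0 : ℝ), (w ^ 2) ^ k / (w ^ 2 + c) ^ (m + 2) := by
  rw [← integral_const_mul, ← integral_add
    (integrable_pow_div_sq_add_pow hc (show k + 1 < m + 2 by omega)).integrableOn
    ((integrable_pow_div_sq_add_pow hc (show k < m + 2 by omega)).const_mul c).integrableOn]
  refine setIntegral_congr_fun measurableSet_Ioi fun w _ => ?_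
  have hpos : 0 < w ^ 2 + c := by positivity
  field_simp
  ring

theorem integral_Ioi_pow_div_sq_add_pow {k m : ℕ} (hkm : k ≤ m) :
    ∫ w in Set.Ioi (0 : ℝ), (w ^ 2) ^ k / (w ^ 2 + c) ^ (m + 1) =
      π / (2 * √c * c ^ m) * (betaHalf k m * c ^ k) := by
  induction m generalizing k with
  | zero =>
    obtain rfl : k = 0 := by omega
    simp only [pow_zero, zero_add, pow_one, one_div, integral_Ioi_inv_sq_add hc, betaHalf_zero_zero]
    ring
  | succ m ih =>
    have hm : (2 * m + 2 : ℝ) ≠ 0 := by positivity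
    rcases k with _ | k
    · have hrec := integral_Ioi_pow_div_sq_add_pow_eq_add hc (Nat.zero_le m)
      have hibp := integral_Ioi_pow_div_sq_add_pow_succ_succ hc (Nat.zero_le m)
      rw [ih (Nat.zero_le m)] at hrec hibp
      have hJ1 := eq_div_of_mul_eq hm ((mul_comm _ _).trans hibp)
      rw [betaHalf_zero_succ, ← mul_right_inj' hc.ne', eq_sub_of_add_eq' hrec.symm, hJ1]
      field_simp
      ring
    · have hibp := integral_Ioi_pow_div_sq_add_pow_succ_succ hc (by omega : k ≤ m)
      rw [ih (by omega)] at hibp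
      rw [betaHalf_succ_succ (by omega), ← mul_right_inj' hm, hibp]
      field_simp
      ring

end PowDivSqAddPow

section ChangeOfVariables

variable {E : Type*} [NormedAddCommGroup E] [NormedSpace ℝ E]

lemma image_inv_Ioi_zero : (fun x : ℝ => x⁻¹) '' Set.Ioi 0 = Set.Ioi 0 := by
  ext x
  constructor
  · rintro ⟨y, hy, rfl⟩
    exact Set.mem_Ioi.2 (inv_pos.2 hy)
  · exact fun hx => ⟨x⁻¹, Set.mem_Ioi.2 (inv_pos.2 hx), inv_inv x⟩

lemma hasDerivWithinAt_inv_Ioi {x : ℝ} (hx : x ∈ Set.Ioi (0 : ℝ)) :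
    HasDerivWithinAt (fun x : ℝ => x⁻¹) (-(x ^ 2)⁻¹) (Set.Ioi 0) x :=
  (hasDerivAt_inv (ne_of_gt hx)).hasDerivWithinAt

lemma abs_neg_inv_sq (x : ℝ) : |-(x ^ 2)⁻¹| = (x ^ 2)⁻¹ := by
  rw [abs_neg, abs_of_nonneg (by positivity)]

theorem integrableOn_Ioi_inv_sq_smul_comp_inv_iff (f : ℝ → E) :
    IntegrableOn (fun x => (x ^ 2)⁻¹ • f x⁻¹) (Set.Ioi 0) ↔
      IntegrableOn f (Set.Ioi 0) := by
  have h := integrableOn_image_iff_integrableOn_abs_deriv_smul measurableSet_Ioi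
    (fun x hx => hasDerivWithinAt_inv_Ioi hx) inv_injective.injOn f
  simp only [image_inv_Ioi_zero, abs_neg_inv_sq] at h
  exact h.symm

theorem integral_Ioi_inv_sq_smul_comp_inv (f : ℝ → E) :
    ∫ x in Set.Ioi (0 : ℝ), (x ^ 2)⁻¹ • f x⁻¹ = ∫ x in Set.Ioi (0 : ℝ), f x := by
  have h := integral_image_eq_integral_abs_deriv_smul measurableSet_Ioi
    (fun x hx => hasDerivWithinAt_inv_Ioi hx) inv_injective.injOn f
  simp only [image_inv_Ioi_zero, abs_neg_inv_sq] at h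
  exact h.symm

lemma image_sub_inv_Ioi_zero : (fun x : ℝ => x - x⁻¹) '' Set.Ioi 0 = Set.univ := by
  refine Set.eq_univ_of_forall fun w => ?_
  have h := sq_sqrt (show 0 ≤ w ^ 2 + 4 by positivity)
  have hpos : 0 < w + √(w ^ 2 + 4) := by nlinarith [sqrt_nonneg (w ^ 2 + 4)]
  refine ⟨(w + √(w ^ 2 + 4)) / 2, half_pos hpos, ?_⟩
  field_simp
  linear_combination h

theorem integral_Ioi_comp_sub_inv (g : ℝ → E) :
    ∫ x in Set.Ioi (0 : ℝ), (1 + (x ^ 2)⁻¹) • g (x - x⁻¹) = ∫ w, g w := by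
  have hmono : StrictMonoOn (fun x : ℝ => x - x⁻¹) (Set.Ioi 0) := fun x hx y _ hxy =>
    sub_lt_sub hxy (inv_strictAnti₀ hx hxy)
  have h := integral_image_eq_integral_abs_deriv_smul (f := fun x => x - x⁻¹) measurableSet_Ioi
    (fun x hx => ((hasDerivAt_id x).sub (hasDerivAt_inv (ne_of_gt hx))).hasDerivWithinAt)
    hmono.injOn g
  rw [image_sub_inv_Ioi_zero, setIntegral_univ] at h
  rw [h]
  refine setIntegral_congr_fun measurableSet_Ioi fun x _ => ?_
  rw [sub_neg_eq_add, abs_of_pos (by positivity)]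

end ChangeOfVariables

theorem integral_Ioi_eq_of_add_inv_eq {f g : ℝ → ℝ} (hf : IntegrableOn f (Set.Ioi 0))
    (hg : ∀ w, g (-w) = g w)
    (hfg : ∀ x > 0, f x + (x ^ 2)⁻¹ * f x⁻¹ = (1 + (x ^ 2)⁻¹) * g (x - x⁻¹)) :
    ∫ x in Set.Ioi 0, f x = ∫ w in Set.Ioi 0, g w := by
  have hf_inv : IntegrableOn (fun x => (x ^ 2)⁻¹ * f x⁻¹) (Set.Ioi 0) :=
    (integrableOn_Ioi_inv_sq_smul_comp_inv_iff f).2 hf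
  have hinv := integral_Ioi_inv_sq_smul_comp_inv f
  have hsub := integral_Ioi_comp_sub_inv g
  simp only [smul_eq_mul] at hinv hsub
  have hg_abs : (fun w => g |w|) = g := funext fun w => by
    rcases abs_choice w with h | h <;> rw [h]
    exact hg w
  have key : 2 * ∫ x in Set.Ioi 0, f x = 2 * ∫ w in Set.Ioi 0, g w :=
    calc 2 * ∫ x in Set.Ioi 0, f x
        = (∫ x in Set.Ioi 0, f x) + ∫ x in Set.Ioi 0, (x ^ 2)⁻¹ * f x⁻¹ := by
          rw [hinv]; ring
      _ = ∫ x in Set.Ioi 0, (1 + (x ^ 2)⁻¹) * g (x - x⁻¹) := by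
          rw [← integral_add hf hf_inv]
          exact setIntegral_congr_fun measurableSet_Ioi fun x hx => hfg x hx
      _ = 2 * ∫ w in Set.Ioi 0, g w := by rw [hsub, ← integral_comp_abs, hg_abs]
  linarith

lemma quartic_eq_sq_mul (a : ℝ) {x : ℝ} (hx : x ≠ 0) :
    x ^ 4 + 2 * a * x ^ 2 + 1 = x ^ 2 * ((x - x⁻¹) ^ 2 + 2 * (a + 1)) := by
  field_simp
  ring

lemma quartic_lower_bound (a x : ℝ) :
    min (1 / 2) ((a + 1) / 2) * (1 + x ^ 2) ^ 2 ≤ x ^ 4 + 2 * a * x ^ 2 + 1 := by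
  set ε := min (1 / 2) ((a + 1) / 2)
  have h₁ : ε ≤ 1 / 2 := min_le_left _ _
  have h₂ : ε ≤ (a + 1) / 2 := min_le_right _ _
  nlinarith [mul_nonneg (by linarith : (0 : ℝ) ≤ 1 - ε) (sq_nonneg (x ^ 2 - 1)),
    mul_nonneg (by linarith : (0 : ℝ) ≤ 2 * a + 2 - 4 * ε) (sq_nonneg x)]

lemma integrable_one_div_quartic_pow {a : ℝ} (ha : -1 < a) (m : ℕ) :
    Integrable fun x : ℝ => 1 / (x ^ 4 + 2 * a * x ^ 2 + 1) ^ (m + 1) := by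
  simpa using integrable_pow_div_pow_of_le (j := 0) (N := m + 1) (d := 2) (by fun_prop)
    (lt_min one_half_pos (by linarith)) (quartic_lower_bound a) (by omega)

lemma one_div_quartic_pow_add_inv {a : ℝ} (ha : -1 < a) (m : ℕ) {x : ℝ} (hx : x ≠ 0) :
    1 / (x ^ 4 + 2 * a * x ^ 2 + 1) ^ (m + 1) +
        (x ^ 2)⁻¹ * (1 / (x⁻¹ ^ 4 + 2 * a * x⁻¹ ^ 2 + 1) ^ (m + 1)) =
      (1 + (x ^ 2)⁻¹) *
        (fibPolyOdd m ((x - x⁻¹) ^ 2) / ((x - x⁻¹) ^ 2 + 2 * (a + 1)) ^ (m + 1)) := by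
  have hQ : 0 < (x - x⁻¹) ^ 2 + 2 * (a + 1) := by nlinarith [sq_nonneg (x - x⁻¹)]
  have hsum : x + x⁻¹ ≠ 0 := by
    rw [← mul_ne_zero_iff_right hx]
    field_simp
    positivity
  have hfib := eq_div_of_mul_eq hsum
    ((mul_comm _ _).trans (pow_add_pow_eq_mul_fibPolyOdd (mul_inv_cancel₀ hx) m).symm)
  rw [quartic_eq_sq_mul a hx, quartic_eq_sq_mul a (inv_ne_zero hx), inv_inv,
    show (x⁻¹ - x) ^ 2 = (x - x⁻¹) ^ 2 by ring, hfib]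
  generalize (x - x⁻¹) ^ 2 + 2 * (a + 1) = Q at hQ ⊢
  have hx2 : x ^ 2 + 1 ≠ 0 := by positivity
  rw [show x + x⁻¹ = (x ^ 2 + 1) / x by field_simp]
  simp only [inv_pow, mul_pow]
  field_simp
  ring

theorem integral_Ioi_fibPolyOdd_div {c : ℝ} (hc : 0 < c) (m : ℕ) :
    ∫ w in Set.Ioi (0 : ℝ), fibPolyOdd m (w ^ 2) / (w ^ 2 + c) ^ (m + 1) =
      π / (2 * √c * c ^ m) *
        ∑ k ∈ range (m + 1), ((m + k).choose (2 * k) : ℝ) * (betaHalf k m * c ^ k) := by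
  simp only [fibPolyOdd, sum_div, mul_div_assoc]
  rw [integral_finsetSum _ fun k hk => ((integrable_pow_div_sq_add_pow hc
    (mem_range.1 hk)).const_mul _).integrableOn, mul_sum]
  refine sum_congr rfl fun k hk => ?_
  rw [integral_const_mul, integral_Ioi_pow_div_sq_add_pow hc (mem_range_succ_iff.1 hk)]
  ring

lemma choose_mul_betaHalf {k m : ℕ} (hkm : k ≤ m) :
    ((m + k).choose (2 * k) : ℝ) * betaHalf k m =
      (m + k).choose k * (m - k).centralBinom / 4 ^ m := by
  have h := Nat.choose_mul (n := m + k) (k := 2 * k) (s := k) (by omega)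
  rw [show m + k - k = m by omega, show 2 * k - k = k by omega,
    ← Nat.centralBinom_eq_two_mul_choose] at h
  have hpos : (0 : ℝ) < m.choose k := by exact_mod_cast Nat.choose_pos hkm
  rify at h
  rw [betaHalf]
  field_simp
  linear_combination (m - k).centralBinom * h

theorem jacobiP_half_eq_sum_betaHalf (m : ℕ) (x : ℝ) :
    jacobiP m ((m:ℝ) + 1/2) (-(m:ℝ) - 1/2) x =
      ∑ k ∈ range (m + 1),
        ((m + k).choose (2 * k) : ℝ) * (betaHalf k m * (2 * (x + 1)) ^ k) := by
  rw [jacobiP_half_eq_sum]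
  exact sum_congr rfl fun k hk => by
    rw [← mul_assoc, choose_mul_betaHalf (mem_range_succ_iff.1 hk)]

lemma two_rpow_mul_rpow {t : ℝ} (ht : 0 < t) (m : ℕ) :
    (2 : ℝ) ^ ((m : ℝ) + 3 / 2) * t ^ ((m : ℝ) + 1 / 2) = 2 * √(2 * t) * (2 * t) ^ m := by
  rw [show (m : ℝ) + 3 / 2 = 1 + ((m : ℝ) + 1 / 2) by ring, rpow_add two_pos, rpow_one,
    mul_assoc, ← mul_rpow zero_le_two ht.le, rpow_add (by positivity), rpow_natCast, sqrt_eq_rpow]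
  ring

theorem integral_N04 (a : ℝ) (ha : -1 < a) (m : ℕ) :
    ∫ x in Set.Ioi (0:ℝ), 1 / (x^4 + 2*a*x^2 + 1)^(m+1) =
      π / ((2:ℝ) ^ ((m:ℝ) + 3/2) * (a + 1) ^ ((m:ℝ) + 1/2)) *
        jacobiP m ((m:ℝ) + 1/2) (-(m:ℝ) - 1/2) a := by
  have hc : 0 < 2 * (a + 1) := by linarith
  rw [integral_Ioi_eq_of_add_inv_eq
      (g := fun w => fibPolyOdd m (w ^ 2) / (w ^ 2 + 2 * (a + 1)) ^ (m + 1))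
      (integrable_one_div_quartic_pow ha m).integrableOn (fun w => by simp)
      (fun x hx => one_div_quartic_pow_add_inv ha m hx.ne'),
    integral_Ioi_fibPolyOdd_div hc, two_rpow_mul_rpow (by linarith), jacobiP_half_eq_sum_betaHalf]
end

section
/- For a fixed nonnegative integer m, the function q(m,z) = 1 - √2 i (1-z²)^{-(m+1/2)} (with a fixed branch of the power) has, for each integer k with 0 ≤ k ≤ m, a zero z_k* characterized by 1 - (z_k*)² = 2^{1/(2m+1)} e^{iθ_k} where (m+1/2)θ_k = π/2 + 2πk, and these enumerate all zeros with 0 ≤ θ < 2π. -/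
open Real Complex

/-! A zero of `q(m, ·)` is a point where `|1-z²|^{m+1/2} e^{i(m+1/2)θ} = √2 · i`. Comparing moduli
forces `|1-z²| = 2^{1/(2m+1)}`, and comparing arguments forces `(m+1/2)θ ≡ π/2 (mod 2π)`;
as `(m+1/2)θ` ranges over `[0, (2m+1)π)`, this leaves exactly the values `π/2 + 2πk`,
`0 ≤ k ≤ m`. Conversely, every such modulus and argument is attained by some `1 - z²`, since
`ℂ` is algebraically closed. -/

lemma Complex.exp_ofReal_mul_I_eq_I_iff {x : ℝ} :
    exp (x * I) = I ↔ ∃ n : ℤ, x = π / 2 + n * (2 * π) := by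
  have hI : exp ((π / 2 : ℝ) * I) = I := by
    rw [exp_mul_I, ← ofReal_cos, ← ofReal_sin, Real.cos_pi_div_two, Real.sin_pi_div_two]
    simp
  nth_rw 2 [← hI]
  rw [exp_eq_exp_iff_exists_int]
  refine exists_congr fun n => ⟨fun h => ?_, fun h => ?_⟩
  · simpa using congrArg im h
  · rw [h]; push_cast; ring

lemma Complex.ofReal_mul_exp_eq_mul_I_iff {a b x : ℝ} (ha : 0 ≤ a) (hb : 0 < b) :
    (a : ℂ) * exp (x * I) = I * b ↔ a = b ∧ exp (x * I) = I := by
  refine ⟨fun h => ?_, fun ⟨hab, hx⟩ => by rw [hab, hx, mul_comm]⟩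
  have hab : a = b := by
    simpa [norm_exp_ofReal_mul_I, abs_of_nonneg ha, abs_of_pos hb] using congrArg norm h
  subst hab
  exact ⟨rfl, mul_left_cancel₀ (ofReal_ne_zero.mpr hb.ne') (h.trans (mul_comm _ _))⟩

lemma Real.two_rpow_inv_two_mul_add_one_rpow (m : ℕ) :
    ((2 : ℝ) ^ ((1 : ℝ) / (2 * m + 1))) ^ ((m : ℝ) + 1 / 2) = √2 := by
  rw [← Real.rpow_mul zero_le_two, Real.sqrt_eq_rpow]
  congr 1
  field_simp

lemma Real.rpow_eq_sqrt_two_iff (m : ℕ) {a : ℝ} (ha : 0 ≤ a) :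
    a ^ ((m : ℝ) + 1 / 2) = √2 ↔ a = (2 : ℝ) ^ ((1 : ℝ) / (2 * m + 1)) := by
  rw [← two_rpow_inv_two_mul_add_one_rpow m, rpow_left_inj ha (by positivity) (by positivity)]

lemma Int.mem_Icc_of_pi_div_two_add_mul_two_pi {m : ℕ} {n : ℤ}
    (hlo : 0 ≤ π / 2 + n * (2 * π)) (hhi : π / 2 + n * (2 * π) < (2 * m + 1) * π) :
    0 ≤ n ∧ n ≤ m := by
  have hπ := Real.pi_pos
  have hlo' : (-1 : ℝ) < n := by nlinarith
  have hhi' : (n : ℝ) < m + 1 := by nlinarith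
  have hlo'' : (-1 : ℤ) < n := by exact_mod_cast hlo'
  have hhi'' : n < (m : ℤ) + 1 := by exact_mod_cast hhi'
  omega

/-- The zeros of `q(m,z) = 1 - √2 i (1-z²)^{-(m+1/2)}` (branch with
`(1-z²)^{m+1/2} = |1-z²|^{m+1/2} e^{i(m+1/2)θ}`, `θ = arg(1-z²) ∈ [0,2π)`):
for each `0 ≤ k ≤ m` there is a zero `z_k*` with
`1-(z_k*)² = 2^{1/(2m+1)} e^{iθ_k}` where `(m+1/2)θ_k = π/2 + 2πk`,
and these enumerate all the zeros with `θ ∈ [0, 2π)`. -/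
theorem enumeration_of_q_zeros (m : ℕ) :
    (∀ k : ℕ, k ≤ m → ∃ z : ℂ,
        1 - z^2 = (((2:ℝ) ^ ((1:ℝ) / (2 * (m:ℝ) + 1)) : ℝ) : ℂ) *
          Complex.exp ((((π / 2 + 2 * π * k) / ((m:ℝ) + 1/2)) : ℝ) * Complex.I) ∧
        ((m:ℝ) + 1/2) * ((π / 2 + 2 * π * k) / ((m:ℝ) + 1/2)) = π / 2 + 2 * π * k ∧
        ((‖1 - z^2‖ ^ ((m:ℝ) + 1/2) : ℝ) : ℂ) *
            Complex.exp ((((m:ℝ) + 1/2) * ((π / 2 + 2 * π * k) / ((m:ℝ) + 1/2)) : ℝ)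
              * Complex.I)
          = Complex.I * (Real.sqrt 2 : ℂ)) ∧
    (∀ z : ℂ, ∀ θ : ℝ, 0 ≤ θ → θ < 2 * π →
      1 - z^2 = (‖1 - z^2‖ : ℂ) * Complex.exp (θ * Complex.I) →
      ((‖1 - z^2‖ ^ ((m:ℝ) + 1/2) : ℝ) : ℂ) *
          Complex.exp ((((m:ℝ) + 1/2) * θ : ℝ) * Complex.I)
        = Complex.I * (Real.sqrt 2 : ℂ) →
      ‖1 - z^2‖ = (2:ℝ) ^ ((1:ℝ) / (2 * (m:ℝ) + 1)) ∧
        ∃ k : ℕ, k ≤ m ∧ θ = (π / 2 + 2 * π * k) / ((m:ℝ) + 1/2)) := by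
  have hM : (0 : ℝ) < m + 1 / 2 := by positivity
  set r : ℝ := (2 : ℝ) ^ ((1 : ℝ) / (2 * m + 1))
  constructor
  · intro k _
    have hθ : ((m : ℝ) + 1 / 2) * ((π / 2 + 2 * π * k) / (m + 1 / 2)) = π / 2 + 2 * π * k :=
      mul_div_cancel₀ _ hM.ne'
    obtain ⟨z, hz⟩ := IsAlgClosed.exists_pow_nat_eq
      (1 - r * exp (((π / 2 + 2 * π * k) / (m + 1 / 2) : ℝ) * I)) two_pos
    have hz' : 1 - z ^ 2 = r * exp (((π / 2 + 2 * π * k) / (m + 1 / 2) : ℝ) * I) := by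
      rw [hz]; ring
    have hnorm : ‖1 - z ^ 2‖ = r := by
      rw [hz', norm_mul, norm_exp_ofReal_mul_I, Complex.norm_of_nonneg (by positivity), mul_one]
    refine ⟨z, hz', hθ, ?_⟩
    rw [ofReal_mul_exp_eq_mul_I_iff (by positivity) (by positivity), hnorm, hθ,
      exp_ofReal_mul_I_eq_I_iff]
    exact ⟨Real.two_rpow_inv_two_mul_add_one_rpow m, k, by push_cast; ring⟩
  · intro z θ hθ0 hθ2π _ hzero
    obtain ⟨hmod, harg⟩ :=
      (ofReal_mul_exp_eq_mul_I_iff (by positivity) (by positivity)).mp hzero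
    obtain ⟨n, hn⟩ := exp_ofReal_mul_I_eq_I_iff.mp harg
    have hlo : 0 ≤ π / 2 + n * (2 * π) := hn ▸ mul_nonneg hM.le hθ0
    have hhi : π / 2 + n * (2 * π) < (2 * m + 1) * π := by
      rw [← hn]; nlinarith [mul_lt_mul_of_pos_left hθ2π hM]
    obtain ⟨hn0, hnm⟩ := Int.mem_Icc_of_pi_div_two_add_mul_two_pi hlo hhi
    lift n to ℕ using hn0
    refine ⟨(Real.rpow_eq_sqrt_two_iff m (norm_nonneg _)).mp hmod, n, by exact_mod_cast hnm, ?_⟩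
    rw [eq_div_iff hM.ne']
    push_cast at hn
    linear_combination hn
end
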